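/- For any string α being searched for in a sorted list S, the number of characters extracted in any single comparison during the search is at most 1 plus max(lcp(α, pred_M), lcp(β, pred_M(β))), bounded by the LCP values at the two block boundaries delimiting α's block in the merged list, where β is the head of the next block. -/

import Mathlib

/-- Length of the longest common prefix of two strings. -/
def lcp {α : Type*} [DecidableEq α] : List α → List α → ℕ
  | a :: s, b :: t => if a = b then lcp s t + 1 else 0
  | _, _ => 0

/-- Number of positions read when comparing two strings character by character
(`lcp + 1` for distinct strings). -/
def readCount {α : Type*} [DecidableEq α] : List α → List α → ℕ
  | a :: s, b :: t => if a = b then readCount s t + 1 else 1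
  | [], [] => 0
  | _, _ => 1

/-- The stable merge of two lists, tagging each element with the list (1 or 2) it
came from; ties are broken in favor of the first list. -/
def mergeTagged {α : Type*} [LinearOrder α] : List α → List α → List (α × ℕ)
  | [], B => B.map (·, 2)
  | a :: A, [] => (a, 1) :: mergeTagged A []
  | a :: A, b :: B =>
    if a ≤ b then (a, 1) :: mergeTagged A (b :: B)
    else (b, 2) :: mergeTagged (a :: A) B
  termination_by A B => A.length + B.length

theorem head_le_of_cons_le [LinearOrder α] {a b : α} {s t : List α}
    (h : a :: s ≤ b :: t) : a ≤ b := by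
  by_contra hb
  exact absurd (List.Lex.rel (not_le.mp hb) : b :: t < a :: s) (not_lt.mpr h)

theorem tail_le_of_cons_le [LinearOrder α] {a : α} {s t : List α}
    (h : a :: s ≤ a :: t) : s ≤ t := by
  by_contra hb
  exact absurd (List.Lex.cons (not_le.mp hb) : a :: t < a :: s) (not_lt.mpr h)

theorem lcp_comm [DecidableEq α] : ∀ x y : List α, lcp x y = lcp y x
  | [], [] => rfl
  | [], _ :: _ => rfl
  | _ :: _, [] => rfl
  | a :: s, b :: t => by
    simp only [lcp]
    rcases eq_or_ne a b with rfl | h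
    · simp [lcp_comm s t]
    · simp [h, h.symm]

theorem lcp_mono [LinearOrder α] :
    ∀ x y z : List α, x ≤ y → y ≤ z → lcp x z ≤ lcp x y ∧ lcp x z ≤ lcp y z := by
  intro x
  induction x with
  | nil => intro y z _ _; constructor <;> simp [lcp]
  | cons a s ih =>
    intro y z hxy hyz
    cases z with
    | nil => constructor <;> simp [lcp]
    | cons c u =>
      rcases eq_or_ne a c with rfl | hac
      · cases y with
        | nil =>
          exact (not_lt.mpr hxy (List.Lex.nil : ([] : List α) < a :: s)).elim
        | cons b t =>
          have hab : a ≤ b := head_le_of_cons_le hxy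
          have hba : b ≤ a := head_le_of_cons_le hyz
          have hb : b = a := le_antisymm hba hab
          subst hb
          have hst : s ≤ t := tail_le_of_cons_le hxy
          have htu : t ≤ u := tail_le_of_cons_le hyz
          obtain ⟨h1, h2⟩ := ih t u hst htu
          constructor <;> simp [lcp, h1, h2]
      · constructor <;> simp [lcp, hac]

theorem readCount_le [DecidableEq α] : ∀ x y : List α, readCount x y ≤ lcp x y + 1
  | [], [] => by simp [readCount, lcp]
  | [], _ :: _ => by simp [readCount, lcp]
  | _ :: _, [] => by simp [readCount, lcp]
  | a :: s, b :: t => by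
    rcases eq_or_ne a b with rfl | h
    · simpa [readCount, lcp] using readCount_le s t
    · simp [readCount, lcp, h]

theorem mem_mergeTagged [LinearOrder α] :
    ∀ A B : List α, ∀ p : α × ℕ, p ∈ mergeTagged A B → p.1 ∈ A ∨ p.1 ∈ B := by
  intro A B
  induction A, B using mergeTagged.induct with
  | case1 B => intro p hp; simp only [mergeTagged] at hp; right;
               obtain ⟨x, hx, rfl⟩ := List.mem_map.mp hp; exact hx
  | case2 a A ih =>
    intro p hp
    simp only [mergeTagged, List.mem_cons] at hp
    rcases hp with rfl | hp
    · simp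
    · rcases ih p hp with h | h
      · exact Or.inl (List.mem_cons_of_mem _ h)
      · simp at h
  | case3 a A b B hle ih =>
    intro p hp
    simp only [mergeTagged, if_pos hle, List.mem_cons] at hp
    rcases hp with rfl | hp
    · simp
    · rcases ih p hp with h | h
      · exact Or.inl (List.mem_cons_of_mem _ h)
      · exact Or.inr h
  | case4 a A b B hle ih =>
    intro p hp
    simp only [mergeTagged, if_neg hle, List.mem_cons] at hp
    rcases hp with rfl | hp
    · simp
    · rcases ih p hp with h | h
      · exact Or.inl h
      · exact Or.inr (List.mem_cons_of_mem _ h)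

theorem sorted_mergeTagged [LinearOrder α] :
    ∀ A B : List α, A.Pairwise (· ≤ ·) → B.Pairwise (· ≤ ·) →
      ((mergeTagged A B).map Prod.fst).Pairwise (· ≤ ·) := by
  intro A B
  induction A, B using mergeTagged.induct with
  | case1 B => intro _ hB; simpa [mergeTagged, List.map_map, Function.comp_def] using hB
  | case2 a A ih =>
    intro hA _
    rw [List.pairwise_cons] at hA
    simp only [mergeTagged, List.map_cons, List.pairwise_cons]
    refine ⟨?_, ih hA.2 (by simp)⟩
    intro y hy
    obtain ⟨p, hp, rfl⟩ := List.mem_map.mp hy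
    rcases mem_mergeTagged A [] p hp with h | h
    · exact hA.1 _ h
    · simp at h
  | case3 a A b B hle ih =>
    intro hA hB
    rw [List.pairwise_cons] at hA
    simp only [mergeTagged, if_pos hle, List.map_cons, List.pairwise_cons]
    refine ⟨?_, ih hA.2 hB⟩
    intro y hy
    obtain ⟨p, hp, rfl⟩ := List.mem_map.mp hy
    rcases mem_mergeTagged A (b :: B) p hp with h | h
    · exact hA.1 _ h
    · rcases List.mem_cons.mp h with rfl | h
      · exact hle
      · exact hle.trans ((List.pairwise_cons.mp hB).1 _ h)
  | case4 a A b B hle ih =>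
    intro hA hB
    rw [List.pairwise_cons] at hB
    have hba : b ≤ a := (not_le.mp hle).le
    simp only [mergeTagged, if_neg hle, List.map_cons, List.pairwise_cons]
    refine ⟨?_, ih hA hB.2⟩
    intro y hy
    obtain ⟨p, hp, rfl⟩ := List.mem_map.mp hy
    rcases mem_mergeTagged (a :: A) B p hp with h | h
    · rcases List.mem_cons.mp h with rfl | h
      · exact hba
      · exact hba.trans ((List.pairwise_cons.mp hA).1 _ h)
    · exact hB.1 _ h

theorem val_mono {α : Type*} [LinearOrder α] {T : List (α × ℕ)}
    (hT : (T.map Prod.fst).Pairwise (· ≤ ·)) (d : α × ℕ)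
    {k l : ℕ} (hkl : k ≤ l) (hl : l < T.length) :
    (T.getD k d).1 ≤ (T.getD l d).1 := by
  rcases eq_or_lt_of_le hkl with rfl | hlt
  · exact le_refl _
  · have hk : k < T.length := lt_trans hlt hl
    rw [List.getD_eq_getElem T d hk, List.getD_eq_getElem T d hl]
    have := (List.pairwise_iff_getElem.mp hT) k l (by simpa using hk) (by simpa using hl) hlt
    simpa using this

/-- Let `M` be the stable sorted merge of sorted string lists `A` and `B` with
source labels, let `α = M[i]` be the first string of a block (positions `i..j`)
and `β = M[j+1]` the first string of the next block.  For any string `γ` of the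
other list, `lcp(α, γ) ≤ max (lcp(α, pred_M(α))) (lcp(β, pred_M(β)))` (lcp with a
nonexistent predecessor being 0), so the comparison of `α` with `γ` extracts at
most `1` plus this maximum characters. -/
theorem comparison_chars_le_boundary_lcp {α : Type*} [LinearOrder α]
    (A B : List (List α))
    (hA : A.Pairwise (· ≤ ·)) (hB : B.Pairwise (· ≤ ·))
    (i j : ℕ)
    (hj : j + 1 < (mergeTagged A B).length) (hij : i ≤ j) :
    let T := mergeTagged A B
    let val : ℕ → List α := fun k => (T.getD k ([], 0)).1
    let lab : ℕ → ℕ := fun k => (T.getD k ([], 0)).2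
    -- `i` starts a block:
    (i = 0 ∨ lab (i - 1) ≠ lab i) →
    -- positions `i..j` form one block:
    (∀ k, i ≤ k → k ≤ j → lab k = lab i) →
    -- `j+1` starts the next block:
    lab j ≠ lab (j + 1) →
    ∀ γ : List α,
      (∃ k, k < T.length ∧ val k = γ ∧ lab k ≠ lab i) →
      lcp (val i) γ ≤
        max (if i = 0 then 0 else lcp (val (i - 1)) (val i))
            (lcp (val (j + 1)) (val j)) ∧
      readCount (val i) γ ≤
        1 + max (if i = 0 then 0 else lcp (val (i - 1)) (val i))
                (lcp (val (j + 1)) (val j)) := by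
  intro T val lab hstart hblock hnext γ hγ
  obtain ⟨k, hkT, hγk, hlabk⟩ := hγ
  have hsorted : (T.map Prod.fst).Pairwise (· ≤ ·) := sorted_mergeTagged A B hA hB
  have hmono : ∀ p q : ℕ, p ≤ q → q < T.length → val p ≤ val q :=
    fun p q hpq hq => val_mono hsorted ([], 0) hpq hq
  have hlen : j + 1 < T.length := hj
  have hjTlt : j < T.length := lt_trans (Nat.lt_succ_self j) hlen
  have hiT : i < T.length := lt_of_le_of_lt hij hjTlt
  have hknot : ¬ (i ≤ k ∧ k ≤ j) := fun h => hlabk (hblock k h.1 h.2)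
  have hmain : lcp (val i) γ ≤
      max (if i = 0 then 0 else lcp (val (i - 1)) (val i))
          (lcp (val (j + 1)) (val j)) := by
    rcases Nat.lt_or_ge k i with hki | hki
    · -- k < i : use left boundary
      have hi0 : i ≠ 0 := by omega
      rw [if_neg hi0]
      have him1 : i - 1 < T.length := lt_of_le_of_lt (by omega) hiT
      have h1 : γ ≤ val (i - 1) := by
        rw [← hγk]; exact hmono k (i - 1) (by omega) him1
      have h2 : val (i - 1) ≤ val i := hmono (i - 1) i (by omega) hiT
      have := (lcp_mono γ (val (i - 1)) (val i) h1 h2).2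
      calc lcp (val i) γ = lcp γ (val i) := lcp_comm _ _
        _ ≤ lcp (val (i - 1)) (val i) := this
        _ ≤ _ := le_max_left _ _
    · -- k > j : use right boundary
      have hkj : j + 1 ≤ k := by omega
      have h1 : val i ≤ val j := hmono i j hij hjTlt
      have h2 : val j ≤ val (j + 1) := hmono j (j + 1) (by omega) hlen
      have h3 : val (j + 1) ≤ γ := by
        rw [← hγk]; exact hmono (j + 1) k hkj hkT
      have ha := (lcp_mono (val i) (val (j + 1)) γ (h1.trans h2) h3).1
      have hb := (lcp_mono (val i) (val j) (val (j + 1)) h1 h2).2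
      calc lcp (val i) γ ≤ lcp (val i) (val (j + 1)) := ha
        _ ≤ lcp (val j) (val (j + 1)) := hb
        _ = lcp (val (j + 1)) (val j) := lcp_comm _ _
        _ ≤ _ := le_max_right _ _
  exact ⟨hmain, (readCount_le _ _).trans (by omega)⟩
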